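/- Let w : ℝ → ℝ be three times continuously differentiable on a neighborhood of 0. Then, as h → 0, the U-MUSCL value with κ = 1/2 reproduces the midpoint value to third order: [(1/2)·(w(0)+w(h))/2 + (1/2)·(w(0) + (h/2)w′(0))] − w(h/2) = O(h³). -/

import Mathlib

/-!
Write `w h = w 0 + h w'(0) + c h² + e h`, where `e h = O(h³)` by Taylor's theorem. The U-MUSCL
combination reproduces every quadratic with the given value and slope at `0` exactly, so its
midpoint error is `e h / 4 - e (h / 2)`, which is `O(h³)`.
-/

open Asymptotics Filter Topology Nat

theorem taylor_isBigO {E : Type*} [NormedAddCommGroup E] [NormedSpace ℝ E]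
    {f : ℝ → E} {x₀ : ℝ} {n : ℕ} {s : Set ℝ}
    (hs : Convex ℝ s) (hx₀ : s ∈ 𝓝 x₀) (hf : ContDiffOn ℝ (n + 1) f s) :
    (fun x ↦ f x - taylorWithinEval f n s x₀ x) =O[𝓝 x₀] fun x ↦ (x - x₀) ^ (n + 1) := by
  have hsucc := taylor_isLittleO hs (mem_of_mem_nhds hx₀) (n := n + 1) (by exact_mod_cast hf)
  rw [nhdsWithin_eq_nhds.mpr hx₀] at hsucc
  have hlast : (fun x ↦ taylorWithinEval f (n + 1) s x₀ x - taylorWithinEval f n s x₀ x)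
      =O[𝓝 x₀] fun x ↦ (x - x₀) ^ (n + 1) := by
    simp only [taylorWithinEval_succ, add_sub_cancel_left]
    refine isBigO_of_le' (c := ‖((n + 1 : ℝ) * n !)⁻¹‖ * ‖iteratedDerivWithin (n + 1) f s x₀‖)
      _ fun x ↦ le_of_eq ?_
    rw [norm_smul, norm_mul]
    ring
  exact (hsucc.isBigO.add hlast).congr_left fun x ↦ sub_add_sub_cancel _ _ _

theorem Asymptotics.IsBigO.comp_const_mul_of_pow {E : Type*} [NormedAddCommGroup E]
    {f : ℝ → E} {n : ℕ} (hf : f =O[𝓝 0] fun x ↦ x ^ n) (c : ℝ) :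
    (fun x ↦ f (c * x)) =O[𝓝 0] fun x ↦ x ^ n := by
  have hc : Tendsto (fun x : ℝ ↦ c * x) (𝓝 0) (𝓝 0) := by
    simpa using (continuous_const_mul c).tendsto 0
  refine (hf.comp_tendsto hc).trans ?_
  simp only [Function.comp_def, mul_pow]
  exact (isBigO_refl _ _).const_mul_left _

/-- For `w` three times continuously differentiable on a neighborhood of 0, the U-MUSCL
value with κ = 1/2 reproduces the midpoint value to third order:
`[(1/2)(w(0)+w(h))/2 + (1/2)(w(0) + (h/2)w′(0))] − w(h/2) = O(h³)` as `h → 0`. -/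
theorem stmt_13 (w : ℝ → ℝ) (s : Set ℝ) (hs : s ∈ nhds (0 : ℝ))
    (hw : ContDiffOn ℝ 3 w s) :
    (fun h : ℝ =>
        ((1/2) * ((w 0 + w h) / 2) + (1/2) * (w 0 + (h/2) * deriv w 0)) - w (h/2))
      =O[nhds 0] fun h : ℝ => h^3 := by
  obtain ⟨δ, hδ, hball⟩ := Metric.mem_nhds_iff.mp hs
  set e : ℝ → ℝ := fun h ↦ w h - taylorWithinEval w 2 (Metric.ball 0 δ) 0 h
  have he : e =O[𝓝 0] fun h ↦ h ^ 3 := by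
    simpa only [sub_zero] using
      taylor_isBigO (convex_ball 0 δ) (Metric.ball_mem_nhds 0 hδ) (hw.mono hball)
  have hE : (fun h : ℝ =>
        ((1/2) * ((w 0 + w h) / 2) + (1/2) * (w 0 + (h/2) * deriv w 0)) - w (h/2))
      = fun h ↦ (1/4) * e h - e (2⁻¹ * h) := by
    funext h
    rw [div_eq_inv_mul h 2]
    simp only [e, taylorWithinEval_succ, taylor_within_zero_eval, iteratedDerivWithin_one,
      derivWithin_of_isOpen Metric.isOpen_ball (Metric.mem_ball_self hδ), smul_eq_mul,
      zero_add, factorial_zero, factorial_one, cast_zero, cast_one]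
    ring
  rw [hE]
  exact (he.const_mul_left _).sub (he.comp_const_mul_of_pow _)
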